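/- arXiv:2305.13122 — 3 statements merged into one kernel-verified Lean document; each statement's English description precedes it below -/
import Mathlib

section
/- Let p ∈ ℕ, let E = EuclideanSpace ℝ (Fin p), let L > 0, and let S : E → E be L-Lipschitz. Let t ∈ ℝ satisfy 0 ≤ t, t ≤ 1 and t ≤ 1/(12·L). Then for all a₀, z ∈ E, writing a_t := Real.exp t • a₀ + (2·(Real.exp t − 1)) • S a₀ + Real.sqrt (Real.exp t − 1) • z, one has ‖S a_t − S a₀‖ ≤ 3·L·t·‖a₀‖ + 6·L·t·‖S a_t‖ + 3·L·Real.sqrt t·‖z‖. -/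
/-!
The displacement of the exponential-integrator step is controlled by `Real.exp t - 1 ≤ 2 * t`:
`‖a_t - a₀‖ ≤ 2t‖a₀‖ + 4t‖S a₀‖ + 2√t‖z‖`. Lipschitz continuity turns this into a bound on
`D := ‖S a_t - S a₀‖` in which `‖S a₀‖ ≤ ‖S a_t‖ + D` reintroduces `D` with coefficient
`4Lt ≤ 1/3`; absorbing that term into the left-hand side costs the factor `3/2`.
-/

open Real

lemma Real.exp_sub_one_le_two_mul {t : ℝ} (ht0 : 0 ≤ t) (ht1 : t ≤ 1) :
    exp t - 1 ≤ 2 * t := by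
  have h := abs_exp_sub_one_le (x := t) (by rwa [abs_of_nonneg ht0])
  rwa [abs_of_nonneg (by linarith [add_one_le_exp t]), abs_of_nonneg ht0] at h

lemma Real.sqrt_exp_sub_one_le_two_mul_sqrt {t : ℝ} (ht0 : 0 ≤ t) (ht1 : t ≤ 1) :
    √(exp t - 1) ≤ 2 * √t :=
  calc √(exp t - 1) ≤ √(2 ^ 2 * t) :=
        sqrt_le_sqrt (by linarith [exp_sub_one_le_two_mul ht0 ht1])
    _ = 2 * √t := by rw [sqrt_mul (by positivity), sqrt_sq zero_le_two]

lemma le_three_halves_mul_of_le_add_mul {D R k : ℝ} (hD : 0 ≤ D) (hk : 3 * k ≤ 1)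
    (h : D ≤ R + k * D) : D ≤ 3 / 2 * R := by
  nlinarith

section ExpIntegrator

variable {E : Type*} [NormedAddCommGroup E] [NormedSpace ℝ E]

/-- The paper's `a_t(a, z)`: the first exponential-integrator step of the reverse SDE with score
estimator `S`. -/
noncomputable def expIntegratorStep (S : E → E) (t : ℝ) (a z : E) : E :=
  exp t • a + (2 * (exp t - 1)) • S a + √(exp t - 1) • z

lemma norm_expIntegratorStep_sub_le (S : E → E) {t : ℝ} (ht0 : 0 ≤ t) (ht1 : t ≤ 1)
    (a z : E) :
    ‖expIntegratorStep S t a z - a‖ ≤ 2 * t * ‖a‖ + 4 * t * ‖S a‖ + 2 * √t * ‖z‖ := by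
  have hδ0 : 0 ≤ exp t - 1 := by linarith [add_one_le_exp t]
  have hδ := exp_sub_one_le_two_mul ht0 ht1
  have hsqrt := sqrt_exp_sub_one_le_two_mul_sqrt ht0 ht1
  have hdiff : expIntegratorStep S t a z - a =
      (exp t - 1) • a + (2 * (exp t - 1)) • S a + √(exp t - 1) • z := by
    unfold expIntegratorStep; module
  calc ‖expIntegratorStep S t a z - a‖
      ≤ (exp t - 1) * ‖a‖ + 2 * (exp t - 1) * ‖S a‖ + √(exp t - 1) * ‖z‖ := by
        rw [hdiff]
        refine norm_add₃_le.trans_eq ?_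
        simp only [norm_smul, norm_eq_abs, abs_of_nonneg hδ0, abs_of_nonneg (sqrt_nonneg _),
          abs_of_nonneg (by positivity : (0 : ℝ) ≤ 2 * (exp t - 1))]
    _ ≤ 2 * t * ‖a‖ + 4 * t * ‖S a‖ + 2 * √t * ‖z‖ := by
        gcongr ?_ * _ + ?_ * _ + ?_ * _
        linarith

end ExpIntegrator

theorem stmt0 (p : ℕ) (L : ℝ) (hL : 0 < L)
    (S : EuclideanSpace ℝ (Fin p) → EuclideanSpace ℝ (Fin p))
    (hS : ∀ a a' : EuclideanSpace ℝ (Fin p), ‖S a - S a'‖ ≤ L * ‖a - a'‖)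
    (t : ℝ) (ht0 : 0 ≤ t) (ht1 : t ≤ 1) (ht2 : t ≤ 1 / (12 * L))
    (a₀ z : EuclideanSpace ℝ (Fin p)) :
    ‖S (Real.exp t • a₀ + (2 * (Real.exp t - 1)) • S a₀ +
        Real.sqrt (Real.exp t - 1) • z) - S a₀‖ ≤
      3 * L * t * ‖a₀‖ +
        6 * L * t * ‖S (Real.exp t • a₀ + (2 * (Real.exp t - 1)) • S a₀ +
          Real.sqrt (Real.exp t - 1) • z)‖ +
        3 * L * Real.sqrt t * ‖z‖ := by
  change ‖S (expIntegratorStep S t a₀ z) - S a₀‖ ≤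
    3 * L * t * ‖a₀‖ + 6 * L * t * ‖S (expIntegratorStep S t a₀ z)‖ + 3 * L * √t * ‖z‖
  set A := expIntegratorStep S t a₀ z
  have hLt : 12 * (L * t) ≤ 1 := by
    rw [le_div_iff₀ (by positivity), mul_comm] at ht2
    linarith
  have hSa₀ := norm_le_norm_add_norm_sub (S A) (S a₀)
  have hself : ‖S A - S a₀‖ ≤
      (2 * L * t * ‖a₀‖ + 4 * L * t * ‖S A‖ + 2 * L * √t * ‖z‖) + 4 * (L * t) * ‖S A - S a₀‖ :=
    calc ‖S A - S a₀‖ ≤ L * ‖A - a₀‖ := hS A a₀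
      _ ≤ L * (2 * t * ‖a₀‖ + 4 * t * ‖S a₀‖ + 2 * √t * ‖z‖) :=
        mul_le_mul_of_nonneg_left (norm_expIntegratorStep_sub_le S ht0 ht1 a₀ z) hL.le
      _ ≤ L * (2 * t * ‖a₀‖ + 4 * t * (‖S A‖ + ‖S A - S a₀‖) + 2 * √t * ‖z‖) := by
        gcongr
      _ = _ := by ring
  have := le_three_halves_mul_of_le_add_mul (norm_nonneg _) (by linarith) hself
  linarith
end

section
/- Let p ∈ ℕ, let E = EuclideanSpace ℝ (Fin p), let L > 0, and let S : E → E be L-Lipschitz. Let t ∈ ℝ satisfy 0 ≤ t, t ≤ 1 and t ≤ 1/(12·L). Then for all a₀, z ∈ E, writing a_t := Real.exp t • a₀ + (2·(Real.exp t − 1)) • S a₀ + Real.sqrt (Real.exp t − 1) • z, one has ‖S a_t − S a₀‖² ≤ 36·L²·t²·‖a₀‖² + 72·L²·t²·‖S a_t‖² + 36·L²·t·‖z‖². -/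
set_option maxHeartbeats 1000000 in
theorem stmt1 (p : ℕ) (L : ℝ) (hL : 0 < L)
    (S : EuclideanSpace ℝ (Fin p) → EuclideanSpace ℝ (Fin p))
    (hS : ∀ a a' : EuclideanSpace ℝ (Fin p), ‖S a - S a'‖ ≤ L * ‖a - a'‖)
    (t : ℝ) (ht0 : 0 ≤ t) (ht1 : t ≤ 1) (ht2 : t ≤ 1 / (12 * L))
    (a₀ z : EuclideanSpace ℝ (Fin p)) :
    ‖S (Real.exp t • a₀ + (2 * (Real.exp t - 1)) • S a₀ +
        Real.sqrt (Real.exp t - 1) • z) - S a₀‖ ^ 2 ≤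
      36 * L ^ 2 * t ^ 2 * ‖a₀‖ ^ 2 +
        72 * L ^ 2 * t ^ 2 * ‖S (Real.exp t • a₀ + (2 * (Real.exp t - 1)) • S a₀ +
          Real.sqrt (Real.exp t - 1) • z)‖ ^ 2 +
        36 * L ^ 2 * t * ‖z‖ ^ 2 := by
  set u : ℝ := Real.exp t - 1 with hu
  set at' : EuclideanSpace ℝ (Fin p) :=
    Real.exp t • a₀ + (2 * u) • S a₀ + Real.sqrt u • z with hat
  have hu0 : 0 ≤ u := by
    have := Real.add_one_le_exp t
    simp [hu]; linarith
  have hu2 : u ≤ 2 * t := by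
    have hx : |t| ≤ 1 := by rw [abs_of_nonneg ht0]; exact ht1
    have := Real.exp_bound hx (n := 1) (by norm_num)
    simp [Finset.sum_range_one] at this
    have h2 := abs_le.mp this
    rw [abs_of_nonneg ht0] at h2
    have := h2.2
    nlinarith [h2.2]
  have hsq : Real.sqrt u ≤ Real.sqrt (2 * t) := Real.sqrt_le_sqrt hu2
  have hdiff : at' - a₀ = u • a₀ + (2 * u) • S a₀ + Real.sqrt u • z := by
    rw [hat, hu]; module
  have hnorm : ‖at' - a₀‖ ≤ u * ‖a₀‖ + 2 * u * ‖S a₀‖ + Real.sqrt u * ‖z‖ := by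
    rw [hdiff]
    calc ‖u • a₀ + (2 * u) • S a₀ + Real.sqrt u • z‖
        ≤ ‖u • a₀ + (2 * u) • S a₀‖ + ‖Real.sqrt u • z‖ := norm_add_le _ _
      _ ≤ ‖u • a₀‖ + ‖(2 * u) • S a₀‖ + ‖Real.sqrt u • z‖ := by
          linarith [norm_add_le (u • a₀) ((2 * u) • S a₀)]
      _ = u * ‖a₀‖ + 2 * u * ‖S a₀‖ + Real.sqrt u * ‖z‖ := by
          rw [norm_smul, norm_smul, norm_smul, Real.norm_eq_abs, Real.norm_eq_abs,
            Real.norm_eq_abs, abs_of_nonneg hu0,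
            abs_of_nonneg (by linarith : (0:ℝ) ≤ 2 * u),
            abs_of_nonneg (Real.sqrt_nonneg u)]
  set D : ℝ := ‖S at' - S a₀‖ with hD
  have hD0 : 0 ≤ D := norm_nonneg _
  have hDle : D ≤ L * (u * ‖a₀‖ + 2 * u * ‖S a₀‖ + Real.sqrt u * ‖z‖) := by
    refine le_trans (hS at' a₀) ?_
    exact mul_le_mul_of_nonneg_left hnorm hL.le
  have hSa0 : ‖S a₀‖ ≤ ‖S at'‖ + D := by
    have : S a₀ = S at' - (S at' - S a₀) := by abel
    rw [this]
    exact norm_sub_le _ _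
  set s : ℝ := Real.sqrt (2 * t) with hs
  have hs0 : 0 ≤ s := Real.sqrt_nonneg _
  have hs2 : s ^ 2 = 2 * t := Real.sq_sqrt (by linarith)
  have hLt : 12 * L * t ≤ 1 := by
    rw [div_eq_mul_inv, one_mul] at ht2
    calc 12 * L * t ≤ 12 * L * (12 * L)⁻¹ := by
          have : (0:ℝ) < 12 * L := by linarith
          exact mul_le_mul_of_nonneg_left ht2 (by linarith)
      _ = 1 := mul_inv_cancel₀ (by linarith)
  have hsqnn : Real.sqrt u * ‖z‖ ≤ s * ‖z‖ :=
    mul_le_mul_of_nonneg_right hsq (norm_nonneg _)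
  -- combine: D ≤ L*(2t‖a₀‖ + 4t(‖S at'‖ + D) + s‖z‖)
  have key : D ≤ L * (2 * t * ‖a₀‖ + 4 * t * (‖S at'‖ + D) + s * ‖z‖) := by
    have h1 : u * ‖a₀‖ ≤ 2 * t * ‖a₀‖ :=
      mul_le_mul_of_nonneg_right hu2 (norm_nonneg _)
    have h2 : 2 * u * ‖S a₀‖ ≤ 4 * t * (‖S at'‖ + D) := by
      have : 2 * u * ‖S a₀‖ ≤ 4 * t * ‖S a₀‖ := by nlinarith [norm_nonneg (S a₀)]
      refine le_trans this ?_
      exact mul_le_mul_of_nonneg_left hSa0 (by linarith)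
    calc D ≤ L * (u * ‖a₀‖ + 2 * u * ‖S a₀‖ + Real.sqrt u * ‖z‖) := hDle
      _ ≤ L * (2 * t * ‖a₀‖ + 4 * t * (‖S at'‖ + D) + s * ‖z‖) := by
          apply mul_le_mul_of_nonneg_left _ hL.le
          linarith
  -- solve for D: since 4Lt ≤ 1/3, D ≤ 3Lt‖a₀‖ + 6Lt‖S at'‖ + (3/2)Ls‖z‖
  have hD3 : D ≤ 3 * L * t * ‖a₀‖ + 6 * L * t * ‖S at'‖ + (3/2) * L * s * ‖z‖ := by
    have hdd : 0 ≤ D * (1 - 12 * L * t) := mul_nonneg hD0 (by linarith)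
    nlinarith [key, hdd]
  have hRHS0 : 0 ≤ 3 * L * t * ‖a₀‖ + 6 * L * t * ‖S at'‖ + (3/2) * L * s * ‖z‖ := by
    have := norm_nonneg a₀; have := norm_nonneg (S at'); have := norm_nonneg z
    positivity
  have hDsq : D ^ 2 ≤ (3 * L * t * ‖a₀‖ + 6 * L * t * ‖S at'‖ + (3/2) * L * s * ‖z‖) ^ 2 := by
    exact pow_le_pow_left₀ hD0 hD3 2
  -- Cauchy split: (X+Y+Z)^2 ≤ 4X² + 2Y² + 8Z²
  have aux2 : ∀ X Y Z : ℝ, (X + Y + Z) ^ 2 ≤ 4 * X ^ 2 + 2 * Y ^ 2 + 8 * Z ^ 2 := by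
    intro X Y Z
    nlinarith [sq_nonneg (Y - X - Z), sq_nonneg (X - Z), sq_nonneg Z]
  have hcs := aux2 (3 * L * t * ‖a₀‖) (6 * L * t * ‖S at'‖) ((3/2) * L * s * ‖z‖)
  have heq : 4 * (3 * L * t * ‖a₀‖) ^ 2 + 2 * (6 * L * t * ‖S at'‖) ^ 2 +
      8 * ((3/2) * L * s * ‖z‖) ^ 2 =
      36 * L ^ 2 * t ^ 2 * ‖a₀‖ ^ 2 + 72 * L ^ 2 * t ^ 2 * ‖S at'‖ ^ 2 +
        36 * L ^ 2 * t * ‖z‖ ^ 2 := by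
    linear_combination 18 * L ^ 2 * ‖z‖ ^ 2 * hs2
  calc D ^ 2 ≤ (3 * L * t * ‖a₀‖ + 6 * L * t * ‖S at'‖ + (3/2) * L * s * ‖z‖) ^ 2 := hDsq
    _ ≤ 4 * (3 * L * t * ‖a₀‖) ^ 2 + 2 * (6 * L * t * ‖S at'‖) ^ 2 +
        8 * ((3/2) * L * s * ‖z‖) ^ 2 := hcs
    _ = _ := heq
end

section
/- Let n ∈ ℕ, E = EuclideanSpace ℝ (Fin n) with Lebesgue measure, t₀ ∈ ℝ, ε > 0, and let p, q, p', q' : ℝ → E → ℝ. Assume: (i) p t a > 0 and q t a > 0 for all t ∈ (t₀ − ε, t₀ + ε) and all a ∈ E; (ii) for every a ∈ E and every t ∈ (t₀ − ε, t₀ + ε), the functions s ↦ p s a and s ↦ q s a have derivatives p' t a and q' t a at t; (iii) for every t ∈ (t₀ − ε, t₀ + ε), the map a ↦ p t a · Real.log (p t a / q t a) is integrable and a.e.-strongly measurable; (iv) there is an integrable G : E → ℝ such that for almost every a and all t ∈ (t₀ − ε, t₀ + ε), |p' t a · (Real.log (p t a / q t a) + 1) − (p t a / q t a) · q' t a| ≤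 G a; (v) the maps a ↦ p' t₀ a, a ↦ p' t₀ a · Real.log (p t₀ a / q t₀ a), and a ↦ (p t₀ a / q t₀ a) · q' t₀ a are integrable, with ∫ p' t₀ a da = 0. Then the function F(t) := ∫ p t a · Real.log (p t a / q t a) da has derivative at t₀ equal to ∫ p' t₀ a · Real.log (p t₀ a / q t₀ a) da − ∫ (p t₀ a / q t₀ a) · q' t₀ a da. -/
open MeasureTheory Set Filter Topology

/-! Pointwise, `∂ₜ (p log (p/q)) = p' (log (p/q) + 1) - (p/q) q'`; the bound `G` lets us
differentiate under the integral sign, and the `+ 1` term integrates to `∫ p' = 0`. -/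

theorem HasDerivAt.mul_log_div {f g : ℝ → ℝ} {f' g' t : ℝ} (hf : HasDerivAt f f' t)
    (hg : HasDerivAt g g' t) (hf₀ : 0 < f t) (hg₀ : 0 < g t) :
    HasDerivAt (fun s => f s * Real.log (f s / g s))
      (f' * (Real.log (f t / g t) + 1) - f t / g t * g') t := by
  have hlog : HasDerivAt (fun s => Real.log (f s / g s))
      ((f' * g t - f t * g') / g t ^ 2 / (f t / g t)) t :=
    (hf.div hg hg₀.ne').log (div_pos hf₀ hg₀).ne'
  refine (hf.mul hlog).congr_deriv ?_
  field_simp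
  ring

section LogDerivIntegrand

variable {α : Type*} [MeasurableSpace α] {μ : Measure α} {f' r g' : α → ℝ}

theorem integrable_mul_log_add_one_sub (hf' : Integrable f' μ)
    (hlog : Integrable (fun a => f' a * Real.log (r a)) μ)
    (hrg : Integrable (fun a => r a * g' a) μ) :
    Integrable (fun a => f' a * (Real.log (r a) + 1) - r a * g' a) μ :=
  ((hlog.add hf').sub hrg).congr <| ae_of_all _ fun a => by
    simp only [Pi.add_apply, Pi.sub_apply]; ring

theorem integral_mul_log_add_one_sub (hf' : Integrable f' μ)
    (hlog : Integrable (fun a => f' a * Real.log (r a)) μ)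
    (hrg : Integrable (fun a => r a * g' a) μ) (hzero : ∫ a, f' a ∂μ = 0) :
    ∫ a, (f' a * (Real.log (r a) + 1) - r a * g' a) ∂μ =
      (∫ a, f' a * Real.log (r a) ∂μ) - ∫ a, r a * g' a ∂μ := by
  simp only [mul_add, mul_one]
  rw [integral_sub (f := fun a => f' a * Real.log (r a) + f' a) (hlog.add hf') hrg,
    integral_add hlog hf', hzero, add_zero]

end LogDerivIntegrand

theorem stmt15 (n : ℕ) (t₀ ε : ℝ) (hε : 0 < ε)
    (p q p' q' : ℝ → EuclideanSpace ℝ (Fin n) → ℝ)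
    (hpos : ∀ t ∈ Ioo (t₀ - ε) (t₀ + ε), ∀ a, 0 < p t a ∧ 0 < q t a)
    (hderiv : ∀ a : EuclideanSpace ℝ (Fin n), ∀ t ∈ Ioo (t₀ - ε) (t₀ + ε),
      HasDerivAt (fun s => p s a) (p' t a) t ∧ HasDerivAt (fun s => q s a) (q' t a) t)
    (hint : ∀ t ∈ Ioo (t₀ - ε) (t₀ + ε),
      Integrable (fun a => p t a * Real.log (p t a / q t a)))
    (hdom : ∃ G : EuclideanSpace ℝ (Fin n) → ℝ, Integrable G ∧
      ∀ᵐ a ∂(volume : Measure (EuclideanSpace ℝ (Fin n))), ∀ t ∈ Ioo (t₀ - ε) (t₀ + ε),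
        |p' t a * (Real.log (p t a / q t a) + 1) - (p t a / q t a) * q' t a| ≤ G a)
    (hint1 : Integrable (fun a => p' t₀ a))
    (hint2 : Integrable (fun a => p' t₀ a * Real.log (p t₀ a / q t₀ a)))
    (hint3 : Integrable (fun a => (p t₀ a / q t₀ a) * q' t₀ a))
    (hzero : (∫ a, p' t₀ a) = 0) :
    HasDerivAt (fun t => ∫ a, p t a * Real.log (p t a / q t a))
      ((∫ a, p' t₀ a * Real.log (p t₀ a / q t₀ a)) -
        ∫ a, (p t₀ a / q t₀ a) * q' t₀ a) t₀ := by
  obtain ⟨G, hG, hGbound⟩ := hdom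
  have hnhds : Ioo (t₀ - ε) (t₀ + ε) ∈ 𝓝 t₀ := Ioo_mem_nhds (by linarith) (by linarith)
  have hmeas : ∀ᶠ t in 𝓝 t₀,
      AEStronglyMeasurable (fun a => p t a * Real.log (p t a / q t a)) :=
    eventually_of_mem hnhds fun t ht => (hint t ht).aestronglyMeasurable
  have hdiff : ∀ a, ∀ t ∈ Ioo (t₀ - ε) (t₀ + ε),
      HasDerivAt (fun s => p s a * Real.log (p s a / q s a))
        (p' t a * (Real.log (p t a / q t a) + 1) - p t a / q t a * q' t a) t := fun a t ht =>
    (hderiv a t ht).1.mul_log_div (hderiv a t ht).2 (hpos t ht a).1 (hpos t ht a).2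
  rw [← integral_mul_log_add_one_sub hint1 hint2 hint3 hzero]
  exact (hasDerivAt_integral_of_dominated_loc_of_deriv_le hnhds hmeas
    (hint t₀ (mem_of_mem_nhds hnhds))
    (integrable_mul_log_add_one_sub hint1 hint2 hint3).aestronglyMeasurable
    (hGbound.mono fun a ha t ht => (Real.norm_eq_abs _).trans_le (ha t ht)) hG
    (ae_of_all _ hdiff)).2
end
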